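/- arXiv:math/9907059 — 6 statements merged into one kernel-verified Lean document; each statement's English description precedes it below -/
import Mathlib

section
/- On the set S = (ℤ² \ {0})/±1, the operation α * α' = ±((x,y) + δ(x',y')), where α = ±(x,y), α' = ±(x',y'), and δ = sign(xy' - x'y) when xy' - x'y ≠ 0 and δ = sign(k) when (x,y) = k(x',y'), is well-defined: the result does not depend on the choice of representatives (x,y) and (x',y') of the classes α and α', and the result is again a nonzero vector up to sign. -/
/-- Determinant of two vectors in ℤ². -/
def det2 (u v : ℤ × ℤ) : ℤ := u.1 * v.2 - u.2 * v.1

/-- The resolution sign δ: the sign of det(u,v) when nonzero; when u and v are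
proportional (u = k·v), the sign of k, computed as the sign of the dot product. -/
def resSign (u v : ℤ × ℤ) : ℤ :=
  if det2 u v ≠ 0 then Int.sign (det2 u v) else Int.sign (u.1 * v.1 + u.2 * v.2)

/-- The sign-resolved multiplication on ℤ² \ {0}: u * v = u + δ·v. -/
def smul2 (u v : ℤ × ℤ) : ℤ × ℤ := u + resSign u v • v

/-- Geometric intersection number on the torus. -/
def Inum (u v : ℤ × ℤ) : ℤ := |det2 u v|

lemma det2_neg_right (u v : ℤ × ℤ) : det2 u (-v) = -det2 u v := by
  simp [det2]; ring

lemma det2_neg_left (u v : ℤ × ℤ) : det2 (-u) v = -det2 u v := by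
  simp [det2]; ring

lemma resSign_neg_right (u v : ℤ × ℤ) : resSign u (-v) = -resSign u v := by
  simp only [resSign, det2_neg_right]
  by_cases h : det2 u v = 0 <;> simp [h, Int.sign_neg]
  · rw [show -(u.1 * v.1) + -(u.2 * v.2) = -(u.1 * v.1 + u.2 * v.2) from by ring,
      Int.sign_neg]

lemma resSign_neg_left (u v : ℤ × ℤ) : resSign (-u) v = -resSign u v := by
  simp only [resSign, det2_neg_left]
  by_cases h : det2 u v = 0 <;> simp [h, Int.sign_neg]
  · rw [show -(u.1 * v.1) + -(u.2 * v.2) = -(u.1 * v.1 + u.2 * v.2) from by ring,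
      Int.sign_neg]

lemma smul2_neg_right (u v : ℤ × ℤ) : smul2 u (-v) = smul2 u v := by
  simp [smul2, resSign_neg_right]

lemma smul2_neg_left (u v : ℤ × ℤ) : smul2 (-u) v = -smul2 u v := by
  simp [smul2, resSign_neg_left]; abel

/-- the multiplication on (ℤ² \ {0})/±1 is well defined: the result
is independent of the choice of representatives up to sign, and is nonzero. -/
theorem mul_well_defined (u v u' v' : ℤ × ℤ) (hu : u ≠ 0) (hv : v ≠ 0)
    (hu' : u' = u ∨ u' = -u) (hv' : v' = v ∨ v' = -v) :
    (smul2 u' v' = smul2 u v ∨ smul2 u' v' = -(smul2 u v)) ∧ smul2 u v ≠ 0 := by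
  constructor
  · rcases hu' with rfl | rfl <;> rcases hv' with rfl | rfl <;>
      simp [smul2_neg_right, smul2_neg_left]
  · intro h
    set δ := resSign u v with hδ
    have h1 : u.1 + δ * v.1 = 0 := congrArg Prod.fst h
    have h2 : u.2 + δ * v.2 = 0 := congrArg Prod.snd h
    have huzero : u.1 ≠ 0 ∨ u.2 ≠ 0 := by
      by_contra hc
      push_neg at hc
      exact hu (Prod.ext hc.1 hc.2)
    have hvzero : v.1 ≠ 0 ∨ v.2 ≠ 0 := by
      by_contra hc
      push_neg at hc
      exact hv (Prod.ext hc.1 hc.2)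
    by_cases hd : det2 u v = 0
    · have hdot : δ = Int.sign (u.1 * v.1 + u.2 * v.2) := by simp [hδ, resSign, hd]
      by_cases hz : u.1 * v.1 + u.2 * v.2 = 0
      · rw [hz] at hdot
        simp at hdot
        rw [hdot] at h1 h2
        rcases huzero with h' | h' <;> [exact h' (by linarith); exact h' (by linarith)]
      · have hu1 : u.1 = -δ * v.1 := by linarith
        have hu2 : u.2 = -δ * v.2 := by linarith
        have hQ : 0 < v.1 * v.1 + v.2 * v.2 := by
          rcases hvzero with h' | h' <;>
            nlinarith [mul_self_nonneg v.1, mul_self_nonneg v.2, mul_self_pos.mpr h']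
        have hdoteq : u.1 * v.1 + u.2 * v.2 = -δ * (v.1 * v.1 + v.2 * v.2) := by
          rw [hu1, hu2]; ring
        rcases lt_trichotomy (u.1 * v.1 + u.2 * v.2) 0 with h' | h' | h'
        · rw [Int.sign_eq_neg_one_iff_neg.mpr h'] at hdot
          rw [hdot] at hdoteq
          nlinarith
        · exact hz h'
        · rw [Int.sign_eq_one_iff_pos.mpr h'] at hdot
          rw [hdot] at hdoteq
          nlinarith
    · have hu1 : u.1 = -δ * v.1 := by linarith
      have hu2 : u.2 = -δ * v.2 := by linarith
      apply hd
      simp only [det2, hu1, hu2]; ring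
end

section
/- The multiplication α * α' = ±((x,y) + δ(x',y')) on (ℤ² \ {0})/±1, where δ is the sign of xy' - x'y (or of k when (x,y) = k(x',y')), is invariant under SL(2,ℤ): for every matrix A ∈ SL(2,ℤ), A(α * α') = (Aα) * (Aα'). -/
/-- The linear action of a 2×2 integer matrix on ℤ². -/
def matAct (A : Matrix.SpecialLinearGroup (Fin 2) ℤ) (u : ℤ × ℤ) : ℤ × ℤ :=
  (A.1 0 0 * u.1 + A.1 0 1 * u.2, A.1 1 0 * u.1 + A.1 1 1 * u.2)

lemma SL2_det (A : Matrix.SpecialLinearGroup (Fin 2) ℤ) :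
    A.1 0 0 * A.1 1 1 - A.1 0 1 * A.1 1 0 = 1 := by
  have := A.2
  rwa [Matrix.det_fin_two] at this

lemma det2_matAct (A : Matrix.SpecialLinearGroup (Fin 2) ℤ) (u v : ℤ × ℤ) :
    det2 (matAct A u) (matAct A v) = det2 u v := by
  have h := SL2_det A
  simp only [det2, matAct]
  linear_combination (u.1 * v.2 - u.2 * v.1) * h

lemma matAct_ne_zero (A : Matrix.SpecialLinearGroup (Fin 2) ℤ) {v : ℤ × ℤ}
    (hv : v ≠ 0) : matAct A v ≠ 0 := by
  intro h
  have h1 : A.1 0 0 * v.1 + A.1 0 1 * v.2 = 0 := congrArg Prod.fst h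
  have h2 : A.1 1 0 * v.1 + A.1 1 1 * v.2 = 0 := congrArg Prod.snd h
  have hd := SL2_det A
  apply hv
  have e1 : v.1 = 0 := by linear_combination A.1 1 1 * h1 - A.1 0 1 * h2 - v.1 * hd
  have e2 : v.2 = 0 := by linear_combination A.1 0 0 * h2 - A.1 1 0 * h1 - v.2 * hd
  exact Prod.ext e1 e2

lemma norm2_pos (w : ℤ × ℤ) (h : w ≠ 0) : 0 < w.1 * w.1 + w.2 * w.2 := by
  have h' : w.1 ≠ 0 ∨ w.2 ≠ 0 := by
    by_contra hc
    push_neg at hc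
    exact h (Prod.ext hc.1 hc.2)
  rcases h' with h' | h'
  · nlinarith [mul_self_pos.mpr h', mul_self_nonneg w.2]
  · nlinarith [mul_self_pos.mpr h', mul_self_nonneg w.1]

lemma resSign_matAct (A : Matrix.SpecialLinearGroup (Fin 2) ℤ) (u v : ℤ × ℤ)
    (hu : u ≠ 0) (hv : v ≠ 0) :
    resSign (matAct A u) (matAct A v) = resSign u v := by
  unfold resSign
  rw [det2_matAct]
  by_cases hd : det2 u v ≠ 0
  · simp [hd]
  · push_neg at hd
    simp only [hd, ne_eq, not_true_eq_false, if_false, not_false_eq_true]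
    -- proportional case: compare signs of dot products
    set a := A.1 0 0; set b := A.1 0 1; set c := A.1 1 0; set d := A.1 1 1
    set D : ℤ := u.1 * v.1 + u.2 * v.2 with hD
    set D' : ℤ := (matAct A u).1 * (matAct A v).1 + (matAct A u).2 * (matAct A v).2 with hD'
    have hvv : (0:ℤ) < v.1 * v.1 + v.2 * v.2 := norm2_pos v hv
    have hAv : matAct A v ≠ 0 := matAct_ne_zero A hv
    have hAvv : (0:ℤ) < (matAct A v).1 * (matAct A v).1 + (matAct A v).2 * (matAct A v).2 :=
      norm2_pos _ hAv
    have key : D * ((matAct A v).1 * (matAct A v).1 + (matAct A v).2 * (matAct A v).2)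
        = D' * (v.1 * v.1 + v.2 * v.2) := by
      have hd0 : u.1 * v.2 - u.2 * v.1 = 0 := hd
      simp only [hD, hD', matAct]
      linear_combination (v.1 ^ 2 * (c * d + a * b) + v.1 * v.2 * (d ^ 2 - c ^ 2 + b ^ 2 - a ^ 2)
        - v.2 ^ 2 * (c * d + a * b)) * hd0
    rcases lt_trichotomy D 0 with h | h | h
    · have : D' < 0 := by nlinarith
      rw [Int.sign_eq_neg_one_of_neg this, Int.sign_eq_neg_one_of_neg h]
    · have : D' = 0 := by
        rcases lt_trichotomy D' 0 with h' | h' | h'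
        · nlinarith
        · exact h'
        · nlinarith
      rw [this, h]
    · have : 0 < D' := by nlinarith
      rw [Int.sign_eq_one_of_pos this, Int.sign_eq_one_of_pos h]

/-- the multiplication on (ℤ² \ {0})/±1 is SL(2,ℤ)-invariant:
A(α * α') = (Aα) * (Aα') as classes up to sign. -/
theorem mul_SL2_invariant (A : Matrix.SpecialLinearGroup (Fin 2) ℤ)
    (u v : ℤ × ℤ) (hu : u ≠ 0) (hv : v ≠ 0) :
    matAct A (smul2 u v) = smul2 (matAct A u) (matAct A v) ∨
      matAct A (smul2 u v) = -(smul2 (matAct A u) (matAct A v)) := by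
  left
  unfold smul2
  rw [resSign_matAct A u v hu hv]
  rw [Prod.ext_iff]
  simp only [matAct, Prod.fst_add, Prod.snd_add, Prod.smul_fst, Prod.smul_snd, smul_eq_mul]
  constructor <;> ring
end

section
/- On the torus model, the geometric intersection number I(α,β) = |xy' - x'y| (for α = ±(x,y), β = ±(x',y')) satisfies the triangle inequality of Theorem 1(g): for all α, β, γ in (ℤ² \ {0})/±1, the sum of any two of the numbers I(α,γ), I(β,γ), I(α*β,γ) is at least the third, where α*β is the multiplication α*β = ±((x,y) + δ(x',y')) with δ the sign of xy' - x'y (or of the proportionality constant). -/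
/-- triangle inequalities (Theorem 1(g)) in the torus model:
the sum of any two of I(α,γ), I(β,γ), I(α*β,γ) is at least the third. -/
theorem triangle_inequalities (u v w : ℤ × ℤ) (hu : u ≠ 0) (hv : v ≠ 0) (hw : w ≠ 0) :
    Inum (smul2 u v) w ≤ Inum u w + Inum v w ∧
    Inum u w ≤ Inum v w + Inum (smul2 u v) w ∧
    Inum v w ≤ Inum u w + Inum (smul2 u v) w := by
  have tri : ∀ a b : ℤ, |a + b| ≤ |a| + |b| ∧ |a| ≤ |b| + |a + b| ∧ |b| ≤ |a| + |a + b| := by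
    intro a b
    rcases abs_cases a with ⟨h1, h2⟩ | ⟨h1, h2⟩ <;>
      rcases abs_cases b with ⟨h3, h4⟩ | ⟨h3, h4⟩ <;>
      rcases abs_cases (a + b) with ⟨h5, h6⟩ | ⟨h5, h6⟩ <;> omega
  have sgn : ∀ n : ℤ, n ≠ 0 → Int.sign n = 1 ∨ Int.sign n = -1 := by
    intro n hn
    rcases lt_trichotomy n 0 with h | h | h
    · right; exact Int.sign_eq_neg_one_iff_neg.mpr h
    · exact absurd h hn
    · left; exact Int.sign_eq_one_iff_pos.mpr h
  have hδ : resSign u v = 1 ∨ resSign u v = -1 := by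
    unfold resSign
    split
    · exact sgn _ ‹_›
    · rename_i h
      push_neg at h
      apply sgn
      intro hdot
      have hu' : u.1 ≠ 0 ∨ u.2 ≠ 0 := by
        by_contra hc; push_neg at hc; exact hu (Prod.ext hc.1 hc.2)
      have hdet : u.1 * v.2 - u.2 * v.1 = 0 := h
      have hsq : 0 < u.1 ^ 2 + u.2 ^ 2 := by
        rcases hu' with h' | h' <;> positivity
      have h1 : v.1 * (u.1 ^ 2 + u.2 ^ 2) = 0 := by linear_combination u.1 * hdot - u.2 * hdet
      have h2 : v.2 * (u.1 ^ 2 + u.2 ^ 2) = 0 := by linear_combination u.2 * hdot + u.1 * hdet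
      have hv1 : v.1 = 0 := by
        rcases mul_eq_zero.mp h1 with h' | h'
        · exact h'
        · exact absurd h' hsq.ne'
      have hv2 : v.2 = 0 := by
        rcases mul_eq_zero.mp h2 with h' | h'
        · exact h'
        · exact absurd h' hsq.ne'
      exact hv (Prod.ext hv1 hv2)
  have hexp : det2 (smul2 u v) w = det2 u w + resSign u v * det2 v w := by
    simp [smul2, det2, Prod.fst_add, Prod.snd_add]
    ring
  unfold Inum
  rcases hδ with h | h <;> rw [hexp, h]
  · simpa using tri (det2 u w) (det2 v w)
  · have := tri (det2 u w) (-det2 v w)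
    simp only [abs_neg] at this
    constructor
    · convert this.1 using 2; ring
    constructor
    · convert this.2.1 using 3; ring
    · convert this.2.2 using 3; ring
end

section
/- On the torus model, cancellation holds: if α = ±(x,y) and β = ±(x',y') satisfy xy' - x'y ≠ 0, then α * (β * α) = β and (α * β) * α = β, where * is the sign-resolved multiplication on (ℤ² \ {0})/±1. -/
lemma resSign_of_pos {u v : ℤ × ℤ} (h : 0 < det2 u v) : resSign u v = 1 := by
  rw [resSign, if_pos h.ne', Int.sign_eq_one_iff_pos.mpr h]

lemma resSign_of_neg {u v : ℤ × ℤ} (h : det2 u v < 0) : resSign u v = -1 := by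
  rw [resSign, if_pos h.ne, Int.sign_eq_neg_one_iff_neg.mpr h]

/-- cancellation in the torus model (Theorem 1(d)):
if det(α,β) ≠ 0 then α*(β*α) = β and (α*β)*α = β as classes up to sign. -/
theorem cancellation (u v : ℤ × ℤ) (h : det2 u v ≠ 0) :
    (smul2 u (smul2 v u) = v ∨ smul2 u (smul2 v u) = -v) ∧
    (smul2 (smul2 u v) u = v ∨ smul2 (smul2 u v) u = -v) := by
  obtain ⟨a, b⟩ := u
  obtain ⟨c, d⟩ := v
  simp only [det2] at h
  rcases lt_or_gt_of_ne h with hd | hd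
  · -- det < 0
    have h1 : smul2 (c, d) (a, b) = (c + a, d + b) := by
      rw [smul2, resSign_of_pos (by simp only [det2]; linarith)]
      simp [Prod.ext_iff]
    have h2 : smul2 (a, b) (c + a, d + b) = -(c, d) := by
      rw [smul2, resSign_of_neg (by simp only [det2]; ring_nf; linarith)]
      simp [Prod.ext_iff] <;> omega
    have h3 : smul2 (a, b) (c, d) = (a - c, b - d) := by
      rw [smul2, resSign_of_neg (by simpa only [det2] using hd)]
      simp [Prod.ext_iff] <;> omega
    have h4 : smul2 (a - c, b - d) (a, b) = -(c, d) := by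
      rw [smul2, resSign_of_neg (by simp only [det2]; ring_nf; linarith)]
      simp [Prod.ext_iff] <;> omega
    exact ⟨Or.inr (by rw [h1, h2]), Or.inr (by rw [h3, h4])⟩
  · -- det > 0
    have h1 : smul2 (c, d) (a, b) = (c - a, d - b) := by
      rw [smul2, resSign_of_neg (by simp only [det2]; linarith)]
      simp [Prod.ext_iff] <;> omega
    have h2 : smul2 (a, b) (c - a, d - b) = (c, d) := by
      rw [smul2, resSign_of_pos (by simp only [det2]; ring_nf; linarith)]
      simp [Prod.ext_iff] <;> omega
    have h3 : smul2 (a, b) (c, d) = (a + c, b + d) := by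
      rw [smul2, resSign_of_pos (by simpa only [det2] using hd)]
      simp [Prod.ext_iff]
    have h4 : smul2 (a + c, b + d) (a, b) = (c, d) := by
      rw [smul2, resSign_of_neg (by simp only [det2]; ring_nf; linarith)]
      simp [Prod.ext_iff] <;> omega
    exact ⟨Or.inl (by rw [h1, h2]), Or.inl (by rw [h3, h4])⟩
end

section
/- Torus version of Theorem 6(b): let α, β be primitive vectors in ℤ² with det(α,β) ≠ 0 (so α and β fill the torus). Then the map T_α^{-1} T_β, where T_v(w) = w + det(w,v)·v, has no fixed nonzero class in (ℤ² \ {0})/±1: there is no w ∈ ℤ² \ {0} with T_α^{-1} T_β (w) = ±w. -/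
/-- The transvection (algebraic Dehn twist) along v: T_v(w) = w + det(w,v)·v. -/
def Tv (v w : ℤ × ℤ) : ℤ × ℤ := w + det2 w v • v

/-- Theorem 6(b), torus version: if primitive α, β fill the
torus (det(α,β) ≠ 0), then T_α⁻¹ T_β fixes no class in (ℤ² \ {0})/±1;
equivalently there is no nonzero w with T_β(w) = ±T_α(w). -/
theorem no_fixed_class (α β : ℤ × ℤ) (hα : IsCoprime α.1 α.2) (hβ : IsCoprime β.1 β.2)
    (hfill : det2 α β ≠ 0) :
    ¬ ∃ w : ℤ × ℤ, w ≠ 0 ∧ (Tv β w = Tv α w ∨ Tv β w = -(Tv α w)) := by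
  rintro ⟨⟨x, y⟩, hw, h | h⟩ <;>
    obtain ⟨p, q⟩ := α <;>
    obtain ⟨r, s⟩ := β <;>
    simp only [Tv, det2, Prod.ext_iff, Prod.mk.injEq, Prod.fst_add, Prod.snd_add,
      Prod.smul_mk, smul_eq_mul, Prod.neg_mk, Prod.mk_add_mk] at h hfill <;>
    obtain ⟨h1, h2⟩ := h
  · -- case Tβ w = Tα w : b•β = a•α
    have e1 : (x * s - y * r) * r = (x * q - y * p) * p := by linarith
    have e2 : (x * s - y * r) * s = (x * q - y * p) * q := by linarith
    have haz : (x * q - y * p) * (p * s - q * r) = 0 := by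
      linear_combination r * e2 - s * e1
    have hbz : (x * s - y * r) * (p * s - q * r) = 0 := by
      linear_combination p * e2 - q * e1
    have ha0 : x * q - y * p = 0 :=
      (mul_eq_zero.1 haz).resolve_right hfill
    have hb0 : x * s - y * r = 0 :=
      (mul_eq_zero.1 hbz).resolve_right hfill
    have hx0 : x * (p * s - q * r) = 0 := by linear_combination p * hb0 - r * ha0
    have hy0 : y * (p * s - q * r) = 0 := by linear_combination q * hb0 - s * ha0
    exact hw (by
      simp only [Prod.ext_iff, Prod.fst_zero, Prod.snd_zero]
      exact ⟨(mul_eq_zero.1 hx0).resolve_right hfill,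
             (mul_eq_zero.1 hy0).resolve_right hfill⟩)
  · -- case Tβ w = -(Tα w) : 2w + b•β + a•α = 0
    have e1 : 2 * x + (x * s - y * r) * r + (x * q - y * p) * p = 0 := by linarith
    have e2 : 2 * y + (x * s - y * r) * s + (x * q - y * p) * q = 0 := by linarith
    have f1 : 2 * (x * q - y * p) = (x * s - y * r) * (p * s - q * r) := by
      linear_combination q * e1 - p * e2
    have f2 : 2 * (x * s - y * r) = -((x * q - y * p) * (p * s - q * r)) := by
      linear_combination s * e1 - r * e2
    have h0 : (x * q - y * p) * (4 + (p * s - q * r) * (p * s - q * r)) = 0 := by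
      linear_combination 2 * f1 + (p * s - q * r) * f2
    have haz : x * q - y * p = 0 := by
      rcases mul_eq_zero.1 h0 with h | h
      · exact h
      · nlinarith [sq_nonneg (p * s - q * r)]
    have hbz : x * s - y * r = 0 := by
      have := f2; rw [haz] at this; linarith
    rw [haz, hbz] at e1 e2
    exact hw (by
      simp only [Prod.ext_iff, Prod.fst_zero, Prod.snd_zero]
      constructor <;> linarith)
end

section
/- If α = ±(x,y) ∈ (ℤ² \ {0})/±1 satisfies α * β = β * α for the sign-resolved multiplication and β = ±(x',y') with (x,y) not proportional to (x',y'), then a contradiction arises; hence α * β = β * α implies det((x,y),(x',y')) = 0, i.e., I(α,β) = 0. (Converse of Theorem 1(b) in the torus model.) -/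
/-- converse of Theorem 1(b), torus model: if α*β = β*α as
classes up to sign, then det(α,β) = 0, i.e. I(α,β) = 0. -/
theorem commuting_implies_disjoint (u v : ℤ × ℤ) (hu : u ≠ 0) (hv : v ≠ 0)
    (h : smul2 u v = smul2 v u ∨ smul2 u v = -(smul2 v u)) :
    det2 u v = 0 := by
  by_contra hd
  have hdvu : det2 v u = -det2 u v := by simp [det2]; ring
  have hdvu0 : det2 v u ≠ 0 := by rw [hdvu]; exact neg_ne_zero.mpr hd
  have h1 : resSign u v = Int.sign (det2 u v) := by simp [resSign, hd]
  have h2 : resSign v u = -Int.sign (det2 u v) := by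
    rw [resSign, if_pos hdvu0, hdvu, Int.sign_neg]
  have hs1 : Int.sign (det2 u v) = 1 ∨ Int.sign (det2 u v) = -1 := by
    rcases lt_or_gt_of_ne hd with h' | h'
    · right; exact Int.sign_eq_neg_one_of_neg h'
    · left; exact Int.sign_eq_one_of_pos h'
  rcases h with h | h <;> rw [smul2, smul2, h1, h2] at h <;>
      rcases hs1 with h' | h' <;> rw [h'] at h <;>
      simp only [one_smul, neg_smul, neg_neg, neg_one_smul, neg_add] at h <;>
      rw [Prod.ext_iff] at h <;>
      simp only [Prod.fst_add, Prod.snd_add, Prod.fst_neg, Prod.snd_neg] at h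
  · exact hu (Prod.ext (by simp only [Prod.fst_zero]; omega)
      (by simp only [Prod.snd_zero]; omega))
  · exact hv (Prod.ext (by simp only [Prod.fst_zero]; omega)
      (by simp only [Prod.snd_zero]; omega))
  · exact hv (Prod.ext (by simp only [Prod.fst_zero]; omega)
      (by simp only [Prod.snd_zero]; omega))
  · exact hu (Prod.ext (by simp only [Prod.fst_zero]; omega)
      (by simp only [Prod.snd_zero]; omega))
end
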